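/- Every tableau FOLP_CS-consistent set of sentences of FOLP can be extended to a set of closed Par-formulas that is tableau FOLP_CS-consistent, maximal, and E-complete. -/

import Mathlib

open scoped Classical

/-- Justification terms of FOLP, built from justification variables `jvar i`,
justification constants `jconst i`, and the operations `+`, `·`, `!`, `genₓ`. -/
inductive Tm : Type
  | jvar : ℕ → Tm
  | jconst : ℕ → Tm
  | plus : Tm → Tm → Tm
  | app : Tm → Tm → Tm
  | bang : Tm → Tm
  | gen : ℕ → Tm → Tm
  deriving DecidableEq

/-- FOLP formulas with extra individual constants from `K` (`K`-formulas).
Individual variables are natural numbers; an argument `Sum.inl x` is an individual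
variable, `Sum.inr a` is an element of `K`.  Predicate symbols are indexed by `ℕ`.
Plain FOLP formulas are `Fm Empty`, Par-formulas are `Fm ℕ` (the parameters being a
separate copy of ℕ, namely the `Sum.inr` part), and `D`-formulas are `Fm D`.
`just t X A` is the justification assertion `t :_X A`. -/
inductive Fm (K : Type) : Type
  | pred : ℕ → List (ℕ ⊕ K) → Fm K
  | neg : Fm K → Fm K
  | imp : Fm K → Fm K → Fm K
  | all : ℕ → Fm K → Fm K
  | ex : ℕ → Fm K → Fm K
  | just : Tm → Finset (ℕ ⊕ K) → Fm K → Fm K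

namespace Fm

variable {K K' : Type}

/-- Free individual variables of a `K`-formula.  Recall that
`FVar (t :_X A) = X` (more precisely, the individual-variable part of `X`). -/
noncomputable def fvar : Fm K → Finset ℕ
  | pred _ args => (args.filterMap Sum.getLeft?).toFinset
  | neg A => A.fvar
  | imp A B => A.fvar ∪ B.fvar
  | all x A => A.fvar.erase x
  | ex x A => A.fvar.erase x
  | just _ X _ => (X.toList.filterMap Sum.getLeft?).toFinset

/-- The elements of `K` occurring in a `K`-formula (for `K = Par` this is `Par(A)`,
for `K = D` this is `D(A)`). -/
noncomputable def kocc : Fm K → Finset K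
  | pred _ args => (args.filterMap Sum.getRight?).toFinset
  | neg A => A.kocc
  | imp A B => A.kocc ∪ B.kocc
  | all _ A => A.kocc
  | ex _ A => A.kocc
  | just _ X A => A.kocc ∪ (X.toList.filterMap Sum.getRight?).toFinset

/-- A `K`-formula is closed if it contains no free occurrences of individual variables. -/
def Closed (A : Fm K) : Prop := A.fvar = ∅

/-- Action of a partial substitution (of elements of `K` for individual variables)
on variables/`K`-elements. -/
def subK (σ : ℕ → Option K) : ℕ ⊕ K → ℕ ⊕ K
  | .inl x => (σ x).elim (.inl x) .inr
  | .inr a => .inr a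

/-- Simultaneous substitution of elements of `K` for free individual variables.
In `t :_X A` only the variables belonging to `X` are free, so only those get
substituted (both inside `X` and inside `A`). -/
noncomputable def msubst (σ : ℕ → Option K) : Fm K → Fm K
  | pred Q args => pred Q (args.map (subK σ))
  | neg A => neg (A.msubst σ)
  | imp A B => imp (A.msubst σ) (B.msubst σ)
  | all x A => all x (A.msubst fun y => if y = x then none else σ y)
  | ex x A => ex x (A.msubst fun y => if y = x then none else σ y)
  | just t X A =>
      just t (X.image (subK σ)) (A.msubst fun y => if Sum.inl y ∈ X then σ y else none)

/-- `A.subst1 x a` is `A(a)`, i.e. `A{x/a}`: the result of replacing all free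
occurrences of the individual variable `x` by the element `a : K`. -/
noncomputable def subst1 (x : ℕ) (a : K) (A : Fm K) : Fm K :=
  A.msubst fun y => if y = x then some a else none

/-- Action of a variable-for-variable substitution on arguments. -/
def subVV (x y : ℕ) : ℕ ⊕ K → ℕ ⊕ K
  | .inl z => if z = x then .inl y else .inl z
  | .inr a => .inr a

/-- `A.vsubst x y` is `A{x/y}`: substitution of the individual variable `y` for
the free occurrences of the individual variable `x`. -/
noncomputable def vsubst (x y : ℕ) : Fm K → Fm K
  | pred Q args => pred Q (args.map (subVV x y))
  | neg A => neg (A.vsubst x y)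
  | imp A B => imp (A.vsubst x y) (B.vsubst x y)
  | all z A => if z = x then all z A else all z (A.vsubst x y)
  | ex z A => if z = x then ex z A else ex z (A.vsubst x y)
  | just t X A =>
      if Sum.inl x ∈ X then just t (X.image (subVV x y)) (A.vsubst x y) else just t X A

/-- `FreeFor y x A`: the variable `y` is substitutable for the variable `x` in `A`
(no free occurrence of `x` lies in the scope of a quantifier binding `y`). -/
def FreeFor (y x : ℕ) : Fm K → Prop
  | pred _ _ => True
  | neg A => FreeFor y x A
  | imp A B => FreeFor y x A ∧ FreeFor y x B
  | all z A => x = z ∨ x ∉ A.fvar ∨ (y ≠ z ∧ FreeFor y x A)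
  | ex z A => x = z ∨ x ∉ A.fvar ∨ (y ≠ z ∧ FreeFor y x A)
  | just _ X A => Sum.inl x ∈ X → FreeFor y x A

/-- Action of a renaming on arguments. -/
def subR (σ : ℕ → ℕ) : ℕ ⊕ K → ℕ ⊕ K
  | .inl x => .inl (σ x)
  | .inr a => .inr a

/-- Renaming of all (free and bound) individual variables. -/
noncomputable def rename (σ : ℕ → ℕ) : Fm K → Fm K
  | pred Q args => pred Q (args.map (subR σ))
  | neg A => neg (A.rename σ)
  | imp A B => imp (A.rename σ) (B.rename σ)
  | all x A => all (σ x) (A.rename σ)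
  | ex x A => ex (σ x) (A.rename σ)
  | just t X A => just t (X.image (subR σ)) (A.rename σ)

/-- Mapping the extra individual constants of a `K`-formula along `f : K → K'`. -/
noncomputable def kmap (f : K → K') : Fm K → Fm K'
  | pred Q args => pred Q (args.map (Sum.map id f))
  | neg A => neg (A.kmap f)
  | imp A B => imp (A.kmap f) (B.kmap f)
  | all x A => all x (A.kmap f)
  | ex x A => ex x (A.kmap f)
  | just t X A => just t (X.image (Sum.map id f)) (A.kmap f)

/-- A size measure used for the well-founded recursion defining truth. -/
noncomputable def size : Fm K → ℕ
  | pred _ _ => 0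
  | neg A => A.size + 1
  | imp A B => A.size + B.size + 1
  | all _ A => A.size + 1
  | ex _ A => A.size + 1
  | just _ _ A => A.size + A.fvar.card + 1


theorem fvar_msubst_subset (σ : ℕ → Option K) (A : Fm K) :
    (A.msubst σ).fvar ⊆ A.fvar := by
  induction A generalizing σ with
  | pred Q args =>
      intro y hy
      simp only [msubst, fvar, List.mem_toFinset, List.mem_filterMap, List.mem_map] at hy ⊢
      obtain ⟨s, ⟨a, ha, rfl⟩, hget⟩ := hy
      cases a with
      | inl z =>
          cases hσ : σ z with
          | none =>
              simp [subK, hσ] at hget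
              exact ⟨Sum.inl z, ha, by simp [hget]⟩
          | some b => simp [subK, hσ] at hget
      | inr b => simp [subK] at hget
  | neg A ih => exact ih σ
  | imp A B ihA ihB =>
      simp only [msubst, fvar]
      exact Finset.union_subset_union (ihA σ) (ihB σ)
  | all x A ih =>
      simp only [msubst, fvar]
      exact Finset.erase_subset_erase x (ih _)
  | ex x A ih =>
      simp only [msubst, fvar]
      exact Finset.erase_subset_erase x (ih _)
  | just t X A ih =>
      intro y hy
      simp only [msubst, fvar, List.mem_toFinset, List.mem_filterMap,
        Finset.mem_toList, Finset.mem_image] at hy ⊢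
      obtain ⟨s, ⟨a, ha, rfl⟩, hget⟩ := hy
      cases a with
      | inl z =>
          cases hσ : σ z with
          | none =>
              refine ⟨Sum.inl z, ha, ?_⟩
              simp only [subK, hσ, Option.elim] at hget
              simpa using hget
          | some b => simp [subK, hσ] at hget
      | inr b => simp [subK] at hget

theorem size_msubst_le (σ : ℕ → Option K) (A : Fm K) :
    (A.msubst σ).size ≤ A.size := by
  induction A generalizing σ with
  | pred Q args => simp [msubst, size]
  | neg A ih => simpa [msubst, size] using ih σ
  | imp A B ihA ihB =>
      simp only [msubst, size]
      have := ihA σ; have := ihB σ; omega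
  | all x A ih => simpa [msubst, size] using ih _
  | ex x A ih => simpa [msubst, size] using ih _
  | just t X A ih =>
      simp only [msubst, size]
      have h1 := ih (fun y => if Sum.inl y ∈ X then σ y else none)
      have h2 := Finset.card_le_card
        (fvar_msubst_subset (fun y => if Sum.inl y ∈ X then σ y else none) A)
      omega

theorem size_subst1_le (x : ℕ) (a : K) (A : Fm K) : (A.subst1 x a).size ≤ A.size :=
  size_msubst_le _ A


/-- `∀A`, the universal closure of `A`. -/
noncomputable def univClosure (A : Fm K) : Fm K :=
  (A.fvar.sort (· ≤ ·)).foldr Fm.all A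

theorem size_foldr_all (l : List ℕ) (A : Fm K) :
    (l.foldr Fm.all A).size = A.size + l.length := by
  induction l with
  | nil => simp
  | cons z l ih => simp only [List.foldr, size, ih, List.length_cons]; omega

theorem size_univClosure (A : Fm K) :
    A.univClosure.size = A.size + A.fvar.card := by
  simp [univClosure, size_foldr_all, Finset.length_sort]

end Fm

/-- Embedding plain FOLP formulas into `K`-formulas. -/
noncomputable def toK {K : Type} : Fm Empty → Fm K := Fm.kmap (fun a => a.elim)

/-- Two FOLP formulas are variable variants if each can be turned into the other
by a renaming of free and bound individual variables. -/
def VariableVariant (A B : Fm Empty) : Prop := ∃ σ : Equiv.Perm ℕ, B = A.rename σ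

/-- The axioms of FOLP: a complete list of first order axiom schemes together
with the justification axiom schemes Ctr, Exp, Sum, jK, jT, j4, Gen. -/
inductive FOLPAxiom : Fm Empty → Prop
  | p1 (A B : Fm Empty) : FOLPAxiom (A.imp (B.imp A))
  | p2 (A B C : Fm Empty) : FOLPAxiom ((A.imp (B.imp C)).imp ((A.imp B).imp (A.imp C)))
  | p3 (A B : Fm Empty) : FOLPAxiom (((A.neg).imp (B.neg)).imp (B.imp A))
  | allElim (x y : ℕ) (A : Fm Empty) : Fm.FreeFor y x A → FOLPAxiom ((Fm.all x A).imp (A.vsubst x y))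
  | allImp (x : ℕ) (A B : Fm Empty) : x ∉ A.fvar →
      FOLPAxiom ((Fm.all x (A.imp B)).imp (A.imp (Fm.all x B)))
  | exIntro (x y : ℕ) (A : Fm Empty) : Fm.FreeFor y x A → FOLPAxiom ((A.vsubst x y).imp (Fm.ex x A))
  | exElim (x : ℕ) (A B : Fm Empty) : x ∉ B.fvar →
      FOLPAxiom ((Fm.all x (A.imp B)).imp ((Fm.ex x A).imp B))
  | ctr (t : Tm) (X : Finset (ℕ ⊕ Empty)) (A : Fm Empty) (y : ℕ) : Sum.inl y ∉ X → y ∉ A.fvar →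
      FOLPAxiom ((Fm.just t (insert (Sum.inl y) X) A).imp (Fm.just t X A))
  | exp (t : Tm) (X : Finset (ℕ ⊕ Empty)) (A : Fm Empty) (y : ℕ) : Sum.inl y ∉ X →
      FOLPAxiom ((Fm.just t X A).imp (Fm.just t (insert (Sum.inl y) X) A))
  | sum1 (s t : Tm) (X : Finset (ℕ ⊕ Empty)) (A : Fm Empty) : FOLPAxiom ((Fm.just s X A).imp (Fm.just (Tm.plus s t) X A))
  | sum2 (s t : Tm) (X : Finset (ℕ ⊕ Empty)) (A : Fm Empty) : FOLPAxiom ((Fm.just s X A).imp (Fm.just (Tm.plus t s) X A))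
  | jK (s t : Tm) (X : Finset (ℕ ⊕ Empty)) (A B : Fm Empty) : FOLPAxiom ((Fm.just s X (A.imp B)).imp
      ((Fm.just t X A).imp (Fm.just (Tm.app s t) X B)))
  | jT (t : Tm) (X : Finset (ℕ ⊕ Empty)) (A : Fm Empty) : FOLPAxiom ((Fm.just t X A).imp A)
  | j4 (t : Tm) (X : Finset (ℕ ⊕ Empty)) (A : Fm Empty) : FOLPAxiom ((Fm.just t X A).imp (Fm.just (Tm.bang t) X (Fm.just t X A)))
  | gen (t : Tm) (X : Finset (ℕ ⊕ Empty)) (A : Fm Empty) (x : ℕ) : Sum.inl x ∉ X →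
      FOLPAxiom ((Fm.just t X A).imp (Fm.just (Tm.gen x t) X (Fm.all x A)))

/-- A constant specification is a set of pairs `(c, A)`, read `c : A`
(that is, `c :_∅ A`), where `A` is an axiom instance. -/
def ConstantSpec (CS : Set (ℕ × Fm Empty)) : Prop := ∀ p ∈ CS, FOLPAxiom p.2

/-- `CS` is axiomatically appropriate: every axiom instance has a constant justifying it. -/
def AxiomaticallyAppropriate (CS : Set (ℕ × Fm Empty)) : Prop :=
  ∀ A, FOLPAxiom A → ∃ c, (c, A) ∈ CS

/-- `CS` is variant closed. -/
def VariantClosed (CS : Set (ℕ × Fm Empty)) : Prop :=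
  ∀ c A B, VariableVariant A B → ((c, A) ∈ CS ↔ (c, B) ∈ CS)

/-- Derivability in the axiomatic system `FOLP_CS`:  axioms, axiom necessitation
restricted to `CS`, modus ponens, and universal generalization. -/
inductive Deriv (CS : Set (ℕ × Fm Empty)) : Fm Empty → Prop
  | ax {A : Fm Empty} : FOLPAxiom A → Deriv CS A
  | an {c : ℕ} {A : Fm Empty} : (c, A) ∈ CS → Deriv CS (Fm.just (Tm.jconst c) ∅ A)
  | mp {A B : Fm Empty} : Deriv CS (A.imp B) → Deriv CS A → Deriv CS B
  | ug {A : Fm Empty} (x : ℕ) : Deriv CS A → Deriv CS (Fm.all x A)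

/-- A Mkrtychev model of `FOLP_CS` with domain `D`:  an interpretation `I` of the
predicate symbols and an admissible evidence function `E` satisfying E1–E6. -/
structure MModel (CS : Set (ℕ × Fm Empty)) (D : Type) : Type where
  dom_nonempty : Nonempty D
  I : ℕ → Set (List D)
  E : Tm → Set (Fm D)
  e1 : ∀ c A, (c, A) ∈ CS → toK A ∈ E (Tm.jconst c)
  e2 : ∀ s t (A B : Fm D), Fm.imp A B ∈ E s → A ∈ E t → B ∈ E (Tm.app s t)
  e3 : ∀ s t, E s ∪ E t ⊆ E (Tm.plus s t)
  e4 : ∀ t (A : Fm D) (X : Finset D), A ∈ E t → A.kocc ⊆ X →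
      Fm.just t (X.image Sum.inr) A ∈ E (Tm.bang t)
  e5 : ∀ t (x : ℕ) (A : Fm D), A ∈ E t → Fm.all x A ∈ E (Tm.gen x t)
  e6 : ∀ t (A : Fm D) (x : ℕ) (a : D), A ∈ E t → A.subst1 x a ∈ E t

/-- Truth of a (closed) `D`-formula in a Mkrtychev model. -/
noncomputable def MModel.Sat {CS : Set (ℕ × Fm Empty)} {D : Type} (M : MModel CS D) :
    Fm D → Prop
  | .pred Q args => ∃ as : List D, args = as.map Sum.inr ∧ as ∈ M.I Q
  | .neg A => ¬ M.Sat A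
  | .imp A B => M.Sat A → M.Sat B
  | .all x A => ∀ a : D, M.Sat (A.subst1 x a)
  | .ex x A => ∃ a : D, M.Sat (A.subst1 x a)
  | .just t _ A => A ∈ M.E t ∧ M.Sat A.univClosure
  termination_by F => F.size
  decreasing_by
    all_goals simp only [Fm.size, Fm.size_univClosure]
    all_goals first
      | omega
      | exact Nat.lt_succ_of_le (Fm.size_subst1_le _ _ _)

/-- Truth of an FOLP sentence in a Mkrtychev model. -/
noncomputable def MModel.SatSentence {CS : Set (ℕ × Fm Empty)} {D : Type}
    (M : MModel CS D) (F : Fm Empty) : Prop := M.Sat (toK F)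

/-- A sentence is `FOLP_CS`-valid if it is true in every Mkrtychev model of `FOLP_CS`. -/
def FOLPValid (CS : Set (ℕ × Fm Empty)) (F : Fm Empty) : Prop :=
  ∀ (D : Type) (M : MModel CS D), M.SatSentence F

/-- Satisfiability of a closed Par-formula `A(u₁,…,uₙ)` in a model:
`M ⊩ A(a₁,…,aₙ)` for some `a₁,…,aₙ ∈ D`. -/
noncomputable def MModel.SatPar {CS : Set (ℕ × Fm Empty)} {D : Type}
    (M : MModel CS D) (F : Fm ℕ) : Prop :=
  ∃ g : ℕ → D, M.Sat (F.kmap g)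

/-- `X ⊆ Par`: the set `X` consists of parameters only. -/
def XPar (X : Finset (ℕ ⊕ ℕ)) : Prop := ∀ s ∈ X, ∃ u : ℕ, s = Sum.inr u

/-- One application of an FOLP tableau rule to a branch (represented by the set `S`
of closed Par-formulas occurring on it), producing the list of extended branches
(one branch for a non-branching rule, two for a branching rule). -/
inductive TabRule : Set (Fm ℕ) → List (Set (Fm ℕ)) → Prop
  | fneg {S A} : Fm.neg (Fm.neg A) ∈ S → TabRule S [insert A S]
  | timp {S A B} : Fm.imp A B ∈ S → TabRule S [insert (Fm.neg A) S, insert B S]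
  | fimp {S A B} : Fm.neg (Fm.imp A B) ∈ S → TabRule S [insert A (insert (Fm.neg B) S)]
  | tall {S x A} (u : ℕ) : Fm.all x A ∈ S → TabRule S [insert (A.subst1 x u) S]
  | fex {S x A} (u : ℕ) : Fm.neg (Fm.ex x A) ∈ S →
      TabRule S [insert (Fm.neg (A.subst1 x u)) S]
  | tex {S x A} (u : ℕ) : Fm.ex x A ∈ S → (∀ F ∈ S, u ∉ F.kocc) →
      TabRule S [insert (A.subst1 x u) S]
  | fall {S x A} (u : ℕ) : Fm.neg (Fm.all x A) ∈ S → (∀ F ∈ S, u ∉ F.kocc) →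
      TabRule S [insert (Fm.neg (A.subst1 x u)) S]
  | tcolon {S t X A} : Fm.just t X A ∈ S → XPar X → TabRule S [insert A.univClosure S]
  | fplus {S t s X A} : Fm.neg (Fm.just (Tm.plus t s) X A) ∈ S → XPar X →
      TabRule S [insert (Fm.neg (Fm.just t X A)) (insert (Fm.neg (Fm.just s X A)) S)]
  | fapp {S s t X B} (A : Fm ℕ) : Fm.neg (Fm.just (Tm.app s t) X B) ∈ S → XPar X →
      (∀ u ∈ A.kocc, Sum.inr u ∈ X) →
      TabRule S [insert (Fm.neg (Fm.just s X (A.imp B))) S,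
                 insert (Fm.neg (Fm.just t X A)) S]
  | fbang {S t X A} : Fm.neg (Fm.just (Tm.bang t) X (Fm.just t X A)) ∈ S → XPar X →
      TabRule S [insert (Fm.neg (Fm.just t X A)) S]
  | ctr {S t X A} (u : ℕ) : Fm.neg (Fm.just t X A) ∈ S → XPar X → Sum.inr u ∉ X →
      TabRule S [insert (Fm.neg (Fm.just t (insert (Sum.inr u) X) A)) S]
  | exp {S t X A} (u : ℕ) : Fm.neg (Fm.just t (insert (Sum.inr u) X) A) ∈ S →
      XPar X → Sum.inr u ∉ X → u ∉ A.kocc →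
      TabRule S [insert (Fm.neg (Fm.just t X A)) S]
  | ins {S t X A} (x u : ℕ) : Fm.neg (Fm.just t X (A.subst1 x u)) ∈ S → XPar X →
      TabRule S [insert (Fm.neg (Fm.just t X A)) S]
  | genx {S t X A x} : Fm.neg (Fm.just (Tm.gen x t) X (Fm.all x A)) ∈ S → XPar X →
      TabRule S [insert (Fm.neg (Fm.just t X A)) S]

/-- `ClosedTableau CS S`: there is a closed `FOLP_CS`-tableau beginning with the
formulas of `S`.  A branch closes if it contains both `A` and `¬A`, or contains
`¬c:A` with `c:A ∈ CS`. -/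
inductive ClosedTableau (CS : Set (ℕ × Fm Empty)) : Set (Fm ℕ) → Prop
  | close {S A} : A ∈ S → Fm.neg A ∈ S → ClosedTableau CS S
  | closeCS {S c A} : (c, A) ∈ CS →
      Fm.neg (Fm.just (Tm.jconst c) ∅ (toK A)) ∈ S → ClosedTableau CS S
  | step {S l} : TabRule S l → (∀ S' ∈ l, ClosedTableau CS S') → ClosedTableau CS S

/-- An `FOLP_CS`-tableau proof of the sentence `F`: a closed tableau beginning
with `¬F`. -/
def TabProof (CS : Set (ℕ × Fm Empty)) (F : Fm Empty) : Prop :=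
  ClosedTableau CS {Fm.neg (toK F)}

/-- A set of closed Par-formulas is tableau `FOLP_CS`-consistent if no finite
subset of it has a closed `FOLP_CS`-tableau. -/
def TabConsistent (CS : Set (ℕ × Fm Empty)) (Γ : Set (Fm ℕ)) : Prop :=
  ∀ S : Set (Fm ℕ), S ⊆ Γ → S.Finite → ¬ ClosedTableau CS S

/-- `Γ` is maximal: it has no proper tableau consistent extension by closed Par-formulas. -/
def MaximalCons (CS : Set (ℕ × Fm Empty)) (Γ : Set (Fm ℕ)) : Prop :=
  TabConsistent CS Γ ∧
    ∀ Δ : Set (Fm ℕ), Γ ⊆ Δ → (∀ F ∈ Δ, F.Closed) → TabConsistent CS Δ → Δ = Γ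

/-- `Γ` is E-complete (with parameters as witnesses). -/
def EComplete (Γ : Set (Fm ℕ)) : Prop :=
  (∀ (x : ℕ) (A : Fm ℕ), Fm.ex x A ∈ Γ → ∃ u : ℕ, A.subst1 x u ∈ Γ) ∧
  (∀ (x : ℕ) (A : Fm ℕ), Fm.neg (Fm.all x A) ∈ Γ → ∃ u : ℕ, Fm.neg (A.subst1 x u) ∈ Γ)

/-- The interpretation of the canonical model determined by `Γ`:
`I(Q) = { (u₁,…,uₙ) | Q(u₁,…,uₙ) ∈ Γ }`. -/
def canI (Γ : Set (Fm ℕ)) (Q : ℕ) : Set (List ℕ) :=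
  {us | Fm.pred Q (us.map Sum.inr) ∈ Γ}

/-- The evidence function of the canonical model determined by `Γ`:
`E(t) = { A | ¬ t:_{Par(A)} A ∉ Γ }`. -/
def canE (Γ : Set (Fm ℕ)) (t : Tm) : Set (Fm ℕ) :=
  {A | Fm.neg (Fm.just t (A.kocc.image Sum.inr) A) ∉ Γ}

/-!
Henkin's construction. Enumerate the Par-formulas and, at stage `n`, add the `n`-th one if it
is closed and keeps the set consistent, together with a Henkin witness `A(u)` (for `∃x A`) or
`¬A(u)` (for `¬∀x A`), `u` a parameter not occurring in the stage. A witness preserves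
consistency: a closed tableau for the stage plus the witness becomes one for the stage by a
single `T∃` or `F∀` step. That step needs closed tableaux to survive weakening by finitely many
formulas, which holds because a permutation of the parameters transforms a closed tableau into
a closed tableau, so the eigen-parameters of a tableau can be moved away from any finite set.
Every stage has finitely many parameters, so fresh ones always exist; the union of the chain is
consistent because tableaux are finite, maximal because every formula was offered, and
E-complete because every witness was added.
-/

deriving instance Countable for Tm, Fm

instance {K : Type} : Nonempty (Fm K) := ⟨.pred 0 []⟩

namespace Fm

variable {K K' K'' : Type}

theorem fvar_kmap (f : K → K') (A : Fm K) : (A.kmap f).fvar = A.fvar := by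
  induction A with
  | pred Q args => simp [kmap, fvar, List.filterMap_map]
  | just t X A ih => ext; simp [kmap, fvar]
  | _ => simp_all [kmap, fvar]

theorem kocc_kmap (f : K → K') (A : Fm K) : (A.kmap f).kocc = A.kocc.image f := by
  induction A with
  | pred Q args => ext; simp [kmap, kocc, List.mem_filterMap, Sum.getRight?_eq_some_iff]
  | just t X A ih => ext; simp [kmap, kocc, ih, Finset.image_union]
  | _ => simp_all [kmap, kocc, Finset.image_union]

theorem mem_kocc_kmap_iff {f : K → K'} (hf : Function.Injective f) {A : Fm K} {a : K} :
    f a ∈ (A.kmap f).kocc ↔ a ∈ A.kocc := by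
  rw [kocc_kmap, hf.mem_finset_image]

theorem kmap_id (A : Fm K) : A.kmap id = A := by
  induction A <;> simp_all [kmap]

theorem kmap_kmap (f : K → K') (g : K' → K'') (A : Fm K) :
    (A.kmap f).kmap g = A.kmap (g ∘ f) := by
  induction A <;> simp_all [kmap, Finset.image_image]

theorem kmap_congr {f g : K → K'} (A : Fm K) (h : ∀ a ∈ A.kocc, f a = g a) :
    A.kmap f = A.kmap g := by
  induction A with
  | pred Q args =>
    simp only [kmap, kocc, List.mem_toFinset, List.mem_filterMap,
      Sum.getRight?_eq_some_iff] at h ⊢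
    congr 1
    refine List.map_congr_left fun s hs => ?_
    cases s <;> simp_all
  | just t X A ih =>
    simp only [kmap, kocc, Finset.mem_union, List.mem_toFinset, List.mem_filterMap,
      Sum.getRight?_eq_some_iff, Finset.mem_toList] at h ⊢
    rw [ih fun a ha => h a (.inl ha)]
    congr 1
    refine Finset.image_congr fun s hs => ?_
    cases s <;> simp_all
  | _ => simp_all [kmap, kocc]

theorem map_subK (f : K → K') (σ : ℕ → Option K) (s : ℕ ⊕ K) :
    Sum.map id f (subK σ s) = subK (fun y => (σ y).map f) (Sum.map id f s) := by
  rcases s with x | a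
  · cases h : σ x <;> simp [subK, h]
  · simp [subK]

theorem kmap_msubst (f : K → K') (σ : ℕ → Option K) (A : Fm K) :
    (A.msubst σ).kmap f = (A.kmap f).msubst (fun y => (σ y).map f) := by
  induction A generalizing σ with
  | pred Q args => simp [msubst, kmap, map_subK]
  | just t X A ih =>
    simp only [msubst, kmap, ih, Finset.image_image]
    congr 2
    · exact funext (map_subK f σ)
    · funext y
      by_cases h : Sum.inl y ∈ X <;> simp [h]
  | _ => simp_all [kmap, msubst, apply_ite]

theorem kmap_subst1 (f : K → K') (x : ℕ) (a : K) (A : Fm K) :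
    (A.subst1 x a).kmap f = (A.kmap f).subst1 x (f a) := by
  simp only [subst1, kmap_msubst, apply_ite, Option.map_some, Option.map_none]

theorem kmap_univClosure (f : K → K') (A : Fm K) :
    A.univClosure.kmap f = (A.kmap f).univClosure := by
  simp only [univClosure, fvar_kmap]
  induction A.fvar.sort (· ≤ ·) <;> simp_all [kmap]

theorem eq_none_of_mem_fvar_msubst {σ : ℕ → Option K} {A : Fm K} {y : ℕ}
    (hy : y ∈ (A.msubst σ).fvar) : σ y = none := by
  induction A generalizing σ with
  | pred Q args =>
    simp only [msubst, fvar, List.mem_toFinset, List.mem_filterMap, List.mem_map] at hy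
    obtain ⟨_, ⟨s, _, rfl⟩, hs⟩ := hy
    rcases s with z | b
    · cases h : σ z <;> simp_all [subK]
    · simp [subK] at hs
  | neg A ih => exact ih hy
  | imp A B ihA ihB =>
    simp only [msubst, fvar, Finset.mem_union] at hy
    exact hy.elim ihA ihB
  | all x A ih | ex x A ih =>
    simp only [msubst, fvar, Finset.mem_erase] at hy
    simpa [hy.1] using ih hy.2
  | just t X A ih =>
    simp only [msubst, fvar, List.mem_toFinset, List.mem_filterMap, Finset.mem_toList,
      Finset.mem_image] at hy
    obtain ⟨_, ⟨s, _, rfl⟩, hs⟩ := hy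
    rcases s with z | b
    · cases h : σ z <;> simp_all [subK]
    · simp [subK] at hs

theorem fvar_subst1_subset (x : ℕ) (a : K) (A : Fm K) :
    (A.subst1 x a).fvar ⊆ A.fvar.erase x := fun y hy =>
  Finset.mem_erase.2
    ⟨fun h => by simpa [h] using eq_none_of_mem_fvar_msubst hy, fvar_msubst_subset _ A hy⟩

theorem Closed.subst1_of_all {x : ℕ} {A : Fm K} (h : (all x A).Closed) (a : K) :
    (A.subst1 x a).Closed :=
  Finset.subset_empty.1 (h ▸ fvar_subst1_subset x a A)

theorem Closed.subst1_of_ex {x : ℕ} {A : Fm K} (h : (ex x A).Closed) (a : K) :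
    (A.subst1 x a).Closed :=
  Finset.subset_empty.1 (h ▸ fvar_subst1_subset x a A)

end Fm

section toK

variable {K K' : Type}

theorem kmap_toK (f : K → K') (A : Fm Empty) : (toK A).kmap f = toK A := by
  rw [toK, Fm.kmap_kmap]
  exact Fm.kmap_congr A fun a => a.elim

theorem kocc_toK (A : Fm Empty) : (toK (K := K) A).kocc = ∅ := by
  simp [toK, Fm.kocc_kmap, Finset.eq_empty_of_isEmpty A.kocc]

theorem Fm.Closed.toK {A : Fm Empty} (h : A.Closed) : (toK (K := K) A).Closed :=
  (Fm.fvar_kmap _ A).trans h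

end toK

theorem List.Forall₂.exists_mem_left {α β : Type*} {R : α → β → Prop} {l₁ : List α}
    {l₂ : List β} (h : List.Forall₂ R l₁ l₂) {b : β} (hb : b ∈ l₂) : ∃ a ∈ l₁, R a b := by
  induction h with
  | nil => cases hb
  | cons hab _ ih =>
    rcases List.mem_cons.1 hb with rfl | hb
    · exact ⟨_, List.mem_cons_self, hab⟩
    · obtain ⟨a, ha, hr⟩ := ih hb
      exact ⟨a, List.mem_cons_of_mem _ ha, hr⟩

def params (Γ : Set (Fm ℕ)) : Set ℕ := ⋃ F ∈ Γ, (F.kocc : Set ℕ)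

theorem notMem_params {Γ : Set (Fm ℕ)} {u : ℕ} : u ∉ params Γ ↔ ∀ F ∈ Γ, u ∉ F.kocc := by
  simp [params]

theorem params_mono {Γ Δ : Set (Fm ℕ)} (h : Γ ⊆ Δ) : params Γ ⊆ params Δ :=
  Set.biUnion_subset_biUnion_left h

theorem Set.Finite.params {Γ : Set (Fm ℕ)} (h : Γ.Finite) : (params Γ).Finite :=
  h.biUnion fun F _ => F.kocc.finite_toSet

theorem params_union (Γ Δ : Set (Fm ℕ)) : params (Γ ∪ Δ) = params Γ ∪ params Δ :=
  Set.biUnion_union Γ Δ _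

theorem params_insert (F : Fm ℕ) (Γ : Set (Fm ℕ)) : params (insert F Γ) = ↑F.kocc ∪ params Γ :=
  Set.biUnion_insert F Γ _

noncomputable def freshParam (Γ : Set (Fm ℕ)) : ℕ := sSup (params Γ) + 1

theorem freshParam_notMem_params {Γ : Set (Fm ℕ)} (h : (params Γ).Finite) :
    freshParam Γ ∉ params Γ := fun hmem => by
  have := le_csSup h.bddAbove hmem
  simp [freshParam] at this

theorem exists_equiv_apply_eq_and_kmap_eq {S : Set (Fm ℕ)} (π : ℕ ≃ ℕ) {u v : ℕ}
    (hu : u ∉ params S) (hv : v ∉ params (Fm.kmap π '' S)) :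
    ∃ π' : ℕ ≃ ℕ, π' u = v ∧ ∀ F ∈ S, F.kmap π' = F.kmap π := by
  refine ⟨π.trans (Equiv.swap (π u) v), by simp, fun F hF => Fm.kmap_congr F fun a ha => ?_⟩
  have hau : π a ≠ π u := π.injective.ne fun h => notMem_params.1 hu F hF (h ▸ ha)
  have hav : π a ≠ v := fun h =>
    notMem_params.1 hv _ ⟨F, hF, rfl⟩ (h ▸ (Fm.mem_kocc_kmap_iff π.injective).2 ha)
  simp [Equiv.swap_apply_of_ne_of_ne hau hav]

theorem exists_fresh_renaming {S T : Set (Fm ℕ)} (hT : T.Finite) (π : ℕ ≃ ℕ)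
    (hST : Fm.kmap π '' S ⊆ T) {u : ℕ} (hu : ∀ F ∈ S, u ∉ F.kocc) :
    ∃ v, (∀ F ∈ T, v ∉ F.kocc) ∧ ∃ π' : ℕ ≃ ℕ, π' u = v ∧ ∀ F ∈ S, F.kmap π' = F.kmap π := by
  have hv := freshParam_notMem_params hT.params
  exact ⟨_, notMem_params.1 hv, exists_equiv_apply_eq_and_kmap_eq π (notMem_params.2 hu)
    fun h => hv (params_mono hST h)⟩

def RenamesInto (S T : Set (Fm ℕ)) : Prop := T.Finite ∧ ∃ π : ℕ ≃ ℕ, Fm.kmap π '' S ⊆ T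

theorem kmap_image_insert_subset {S T : Set (Fm ℕ)} {π : ℕ → ℕ} (hST : Fm.kmap π '' S ⊆ T)
    {A B : Fm ℕ} (hAB : A.kmap π = B) : Fm.kmap π '' insert A S ⊆ insert B T := by
  rw [Set.image_insert_eq, hAB]
  exact Set.insert_subset_insert hST

/- `Fm.kmap` builds its images with a classical `DecidableEq` instance while `TabRule` inserts
with the computable one: hence the implicit instance here, and the `congr!`/`convert` in the
`ctr` and `exp` cases below. -/
theorem XPar.image_map {_ : DecidableEq (ℕ ⊕ ℕ)} {X : Finset (ℕ ⊕ ℕ)} (h : XPar X)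
    (π : ℕ → ℕ) : XPar (X.image (Sum.map id π)) := by
  simp only [XPar, Finset.mem_image, forall_exists_index, and_imp, forall_apply_eq_imp_iff₂]
  intro s hs
  obtain ⟨u, rfl⟩ := h s hs
  exact ⟨π u, rfl⟩

theorem TabRule.exists_renamesInto {S : Set (Fm ℕ)} {l : List (Set (Fm ℕ))} (r : TabRule S l)
    {T : Set (Fm ℕ)} (hT : T.Finite) (π : ℕ ≃ ℕ) (hST : Fm.kmap π '' S ⊆ T) :
    ∃ l', TabRule T l' ∧ List.Forall₂ RenamesInto l l' := by
  have mem {F : Fm ℕ} (hF : F ∈ S) : F.kmap π ∈ T := hST ⟨F, hF, rfl⟩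
  have ins {A B : Fm ℕ} (hAB : A.kmap π = B) : RenamesInto (insert A S) (insert B T) :=
    ⟨hT.insert B, π, kmap_image_insert_subset hST hAB⟩
  have ins₂ {A B A' B' : Fm ℕ} (hAB : A.kmap π = B) (hAB' : A'.kmap π = B') :
      RenamesInto (insert A (insert A' S)) (insert B (insert B' T)) :=
    ⟨(hT.insert B').insert B, π, kmap_image_insert_subset (kmap_image_insert_subset hST hAB') hAB⟩
  cases r with
  | fneg h => exact ⟨_, .fneg (mem h), .cons (ins rfl) .nil⟩
  | timp h => exact ⟨_, .timp (mem h), .cons (ins rfl) (.cons (ins rfl) .nil)⟩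
  | fimp h => exact ⟨_, .fimp (mem h), .cons (ins₂ rfl rfl) .nil⟩
  | tall u h =>
    exact ⟨_, .tall (π u) (mem h), .cons (ins (Fm.kmap_subst1 _ _ _ _)) .nil⟩
  | fex u h =>
    exact ⟨_, .fex (π u) (mem h), .cons (ins (congrArg _ (Fm.kmap_subst1 _ _ _ _))) .nil⟩
  | @tex x A u h hu =>
    obtain ⟨v, hv, π', rfl, hπ'⟩ := exists_fresh_renaming hT π hST hu
    have hA : A.kmap π' = A.kmap π := by simpa [Fm.kmap] using hπ' _ h
    refine ⟨_, .tex (π' u) (mem h) hv, .cons ⟨hT.insert _, π', ?_⟩ .nil⟩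
    refine kmap_image_insert_subset (Set.image_congr hπ' ▸ hST) ?_
    rw [Fm.kmap_subst1, hA]
  | @fall x A u h hu =>
    obtain ⟨v, hv, π', rfl, hπ'⟩ := exists_fresh_renaming hT π hST hu
    have hA : A.kmap π' = A.kmap π := by simpa [Fm.kmap] using hπ' _ h
    refine ⟨_, .fall (π' u) (mem h) hv, .cons ⟨hT.insert _, π', ?_⟩ .nil⟩
    refine kmap_image_insert_subset (Set.image_congr hπ' ▸ hST) ?_
    rw [Fm.kmap, Fm.kmap_subst1, hA]
  | tcolon h hX =>
    exact ⟨_, .tcolon (mem h) (hX.image_map π), .cons (ins (Fm.kmap_univClosure _ _)) .nil⟩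
  | fplus h hX => exact ⟨_, .fplus (mem h) (hX.image_map π), .cons (ins₂ rfl rfl) .nil⟩
  | fapp A h hX hA =>
    refine ⟨_, .fapp (A.kmap π) (mem h) (hX.image_map π) ?_,
      .cons (ins rfl) (.cons (ins rfl) .nil)⟩
    simpa [Fm.kocc_kmap] using hA
  | fbang h hX => exact ⟨_, .fbang (mem h) (hX.image_map π), .cons (ins rfl) .nil⟩
  | ctr u h hX hu =>
    refine ⟨_, .ctr (π u) (mem h) (hX.image_map π) ?_, .cons (ins ?_) .nil⟩
    · simpa using hu
    · simp only [Fm.kmap, Finset.image_insert, Sum.map_inr]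
      congr!
  | exp u h hX hu huA =>
    have h' := mem h
    simp only [Fm.kmap, Finset.image_insert, Sum.map_inr] at h'
    refine ⟨_, .exp (π u) (by convert h') (hX.image_map π) (by simpa using hu)
      ((Fm.mem_kocc_kmap_iff π.injective).not.2 huA), .cons (ins rfl) .nil⟩
  | ins x u h hX =>
    exact ⟨_, .ins x (π u) (by simpa [Fm.kmap, Fm.kmap_subst1] using mem h) (hX.image_map π),
      .cons (ins rfl) .nil⟩
  | genx h hX => exact ⟨_, .genx (mem h) (hX.image_map π), .cons (ins rfl) .nil⟩

theorem ClosedTableau.of_renamesInto {CS : Set (ℕ × Fm Empty)} {S T : Set (Fm ℕ)}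
    (h : ClosedTableau CS S) (hST : RenamesInto S T) : ClosedTableau CS T := by
  induction h generalizing T with
  | close hA hnA =>
    obtain ⟨-, π, hST⟩ := hST
    exact .close (hST ⟨_, hA, rfl⟩) (hST ⟨_, hnA, rfl⟩)
  | closeCS hc h =>
    obtain ⟨-, π, hST⟩ := hST
    exact .closeCS hc (by simpa [Fm.kmap, kmap_toK] using hST ⟨_, h, rfl⟩)
  | step r _ ih =>
    obtain ⟨hT, π, hST⟩ := hST
    obtain ⟨l', r', hl⟩ := r.exists_renamesInto hT π hST
    refine .step r' fun T' hT' => ?_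
    obtain ⟨S', hS', hS'T'⟩ := hl.exists_mem_left hT'
    exact ih S' hS' hS'T'

theorem ClosedTableau.mono {CS : Set (ℕ × Fm Empty)} {S T : Set (Fm ℕ)}
    (h : ClosedTableau CS S) (hST : S ⊆ T) (hT : T.Finite) : ClosedTableau CS T :=
  h.of_renamesInto ⟨hT, Equiv.refl ℕ, by simpa [Fm.kmap_id] using hST⟩

section Consistency

variable {CS : Set (ℕ × Fm Empty)} {Γ Δ : Set (Fm ℕ)}

theorem TabConsistent.mono (hΔ : TabConsistent CS Δ) (h : Γ ⊆ Δ) : TabConsistent CS Γ :=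
  fun S hS hfin => hΔ S (hS.trans h) hfin

theorem TabConsistent.iUnion {ι : Type*} [Nonempty ι] {Γ : ι → Set (Fm ℕ)}
    (hdir : Directed (· ⊆ ·) Γ) (h : ∀ i, TabConsistent CS (Γ i)) :
    TabConsistent CS (⋃ i, Γ i) := by
  intro S hS hfin
  obtain ⟨i, hi⟩ := hdir.exists_mem_subset_of_finset_subset_biUnion (s := hfin.toFinset)
    (by simpa using hS)
  exact h i S (by simpa using hi) hfin

theorem TabConsistent.insert_of_tabRule {F W : Fm ℕ} (hΓ : TabConsistent CS Γ) (hF : F ∈ Γ)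
    (hrule : ∀ T ⊆ Γ, F ∈ T → TabRule T [insert W T]) : TabConsistent CS (insert W Γ) := by
  intro S hS hfin hclosed
  have hTΓ : insert F (S \ {W}) ⊆ Γ :=
    Set.insert_subset hF fun G hG => (hS hG.1).resolve_left hG.2
  have hTfin : (insert F (S \ {W})).Finite := hfin.sdiff.insert F
  refine hΓ _ hTΓ hTfin (.step (hrule _ hTΓ (Set.mem_insert _ _)) ?_)
  simp only [List.mem_singleton, forall_eq]
  refine hclosed.mono (fun G hG => ?_) (hTfin.insert W)
  by_cases hGW : G = W <;> simp [hG, hGW]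

end Consistency

def henkinWitness (u : ℕ) : Fm ℕ → Set (Fm ℕ)
  | .ex x A => {A.subst1 x u}
  | .neg (.all x A) => {.neg (A.subst1 x u)}
  | _ => ∅

theorem henkinWitness_finite (u : ℕ) (F : Fm ℕ) : (henkinWitness u F).Finite := by
  unfold henkinWitness
  split <;> simp

theorem Fm.Closed.of_mem_henkinWitness {u : ℕ} {F G : Fm ℕ} (hF : F.Closed)
    (hG : G ∈ henkinWitness u F) : G.Closed := by
  unfold henkinWitness at hG
  split at hG
  · exact Set.mem_singleton_iff.1 hG ▸ hF.subst1_of_ex u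
  · exact Set.mem_singleton_iff.1 hG ▸ Fm.Closed.subst1_of_all hF u
  · cases hG

theorem TabConsistent.union_henkinWitness {CS : Set (ℕ × Fm Empty)} {Γ : Set (Fm ℕ)}
    {F : Fm ℕ} {u : ℕ} (hΓ : TabConsistent CS Γ) (hF : F ∈ Γ) (hu : u ∉ params Γ) :
    TabConsistent CS (henkinWitness u F ∪ Γ) := by
  have fresh (T : Set (Fm ℕ)) (hT : T ⊆ Γ) : ∀ G ∈ T, u ∉ G.kocc :=
    fun G hG => notMem_params.1 hu G (hT hG)
  unfold henkinWitness
  split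
  · rw [Set.singleton_union]
    exact hΓ.insert_of_tabRule hF fun T hT hFT => .tex u hFT (fresh T hT)
  · rw [Set.singleton_union]
    exact hΓ.insert_of_tabRule hF fun T hT hFT => .fall u hFT (fresh T hT)
  · rwa [Set.empty_union]

section Lindenbaum

variable (CS : Set (ℕ × Fm Empty))

noncomputable def lindenbaumStep (Γ : Set (Fm ℕ)) (F : Fm ℕ) : Set (Fm ℕ) :=
  if F.Closed ∧ TabConsistent CS (insert F Γ) then
    henkinWitness (freshParam (insert F Γ)) F ∪ insert F Γ
  else Γ

noncomputable def lindenbaumChain (Γ₀ : Set (Fm ℕ)) (e : ℕ → Fm ℕ) : ℕ → Set (Fm ℕ)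
  | 0 => Γ₀
  | n + 1 => lindenbaumStep CS (lindenbaumChain Γ₀ e n) (e n)

structure IsLindenbaumStage (Γ : Set (Fm ℕ)) : Prop where
  consistent : TabConsistent CS Γ
  closed : ∀ F ∈ Γ, F.Closed
  params_finite : (params Γ).Finite

variable {CS}

theorem subset_lindenbaumStep (Γ : Set (Fm ℕ)) (F : Fm ℕ) : Γ ⊆ lindenbaumStep CS Γ F := by
  unfold lindenbaumStep
  split_ifs
  exacts [(Set.subset_insert F Γ).trans Set.subset_union_right, subset_rfl]

theorem IsLindenbaumStage.step {Γ : Set (Fm ℕ)} (h : IsLindenbaumStage CS Γ)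
    (F : Fm ℕ) : IsLindenbaumStage CS (lindenbaumStep CS Γ F) := by
  unfold lindenbaumStep
  split_ifs with hF
  · obtain ⟨hFc, hcons⟩ := hF
    have hfin : (params (insert F Γ)).Finite := by
      rw [params_insert]
      exact F.kocc.finite_toSet.union h.params_finite
    refine ⟨hcons.union_henkinWitness (Set.mem_insert F Γ) (freshParam_notMem_params hfin),
      ?_, ?_⟩
    · rintro G (hG | rfl | hG)
      exacts [hFc.of_mem_henkinWitness hG, hFc, h.closed G hG]
    · rw [params_union]
      exact (henkinWitness_finite _ F).params.union hfin
  · exact h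

theorem lindenbaumChain_mono (Γ₀ : Set (Fm ℕ)) (e : ℕ → Fm ℕ) :
    Monotone (lindenbaumChain CS Γ₀ e) :=
  monotone_nat_of_le_succ fun n => subset_lindenbaumStep _ (e n)

theorem IsLindenbaumStage.chain {Γ₀ : Set (Fm ℕ)} (h : IsLindenbaumStage CS Γ₀)
    (e : ℕ → Fm ℕ) (n : ℕ) : IsLindenbaumStage CS (lindenbaumChain CS Γ₀ e n) := by
  induction n with
  | zero => exact h
  | succ n ih => exact ih.step (e n)

theorem IsLindenbaumStage.tabConsistent_iUnion {Γ₀ : Set (Fm ℕ)} (h : IsLindenbaumStage CS Γ₀)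
    (e : ℕ → Fm ℕ) : TabConsistent CS (⋃ n, lindenbaumChain CS Γ₀ e n) :=
  .iUnion (lindenbaumChain_mono Γ₀ e).directed_le fun n => (h.chain e n).consistent

theorem IsLindenbaumStage.closed_of_mem_iUnion {Γ₀ : Set (Fm ℕ)} (h : IsLindenbaumStage CS Γ₀)
    (e : ℕ → Fm ℕ) : ∀ F ∈ ⋃ n, lindenbaumChain CS Γ₀ e n, F.Closed := by
  simp only [Set.mem_iUnion, forall_exists_index]
  exact fun F n hF => (h.chain e n).closed F hF

theorem exists_henkinWitness_subset_iUnion_lindenbaumChain {Γ₀ : Set (Fm ℕ)} {e : ℕ → Fm ℕ}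
    (he : e.Surjective) {F : Fm ℕ} (hF : F.Closed)
    (hcons : TabConsistent CS (insert F (⋃ n, lindenbaumChain CS Γ₀ e n))) :
    ∃ u, insert F (henkinWitness u F) ⊆ ⋃ n, lindenbaumChain CS Γ₀ e n := by
  obtain ⟨n, rfl⟩ := he F
  have hstep : lindenbaumChain CS Γ₀ e (n + 1) =
      henkinWitness (freshParam (insert (e n) (lindenbaumChain CS Γ₀ e n))) (e n) ∪
        insert (e n) (lindenbaumChain CS Γ₀ e n) :=
    if_pos ⟨hF, hcons.mono (Set.insert_subset_insert (Set.subset_iUnion _ n))⟩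
  refine ⟨freshParam (insert (e n) (lindenbaumChain CS Γ₀ e n)),
    subset_trans ?_ (Set.subset_iUnion _ (n + 1))⟩
  rw [hstep]
  exact Set.insert_subset (.inr (Set.mem_insert _ _)) Set.subset_union_left

end Lindenbaum

theorem extend_to_maximal_Ecomplete_general
    (CS : Set (ℕ × Fm Empty))
    (Γ₀ : Set (Fm Empty)) (hsen : ∀ F ∈ Γ₀, F.Closed)
    (hcons : TabConsistent CS (toK '' Γ₀)) :
    ∃ Γ : Set (Fm ℕ), toK '' Γ₀ ⊆ Γ ∧ (∀ F ∈ Γ, F.Closed) ∧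
      MaximalCons CS Γ ∧ EComplete Γ := by
  obtain ⟨e, he⟩ := exists_surjective_nat (Fm ℕ)
  have h₀ : IsLindenbaumStage CS (toK '' Γ₀) :=
    ⟨hcons, Set.forall_mem_image.2 fun F hF => (hsen F hF).toK, by simp [params, kocc_toK]⟩
  set Γ := ⋃ n, lindenbaumChain CS (toK '' Γ₀) e n
  have hΓ : TabConsistent CS Γ := h₀.tabConsistent_iUnion e
  have hclosed : ∀ F ∈ Γ, F.Closed := h₀.closed_of_mem_iUnion e
  have absorb {F} (hF : F.Closed) (hFΓ : TabConsistent CS (insert F Γ)) :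
      ∃ u, insert F (henkinWitness u F) ⊆ Γ :=
    exists_henkinWitness_subset_iUnion_lindenbaumChain he hF hFΓ
  have witness {F} (hF : F ∈ Γ) : ∃ u, insert F (henkinWitness u F) ⊆ Γ :=
    absorb (hclosed F hF) (by rwa [Set.insert_eq_of_mem hF])
  refine ⟨Γ, Set.subset_iUnion (lindenbaumChain CS _ e) 0, hclosed,
    ⟨hΓ, fun Δ hΓΔ hΔ hΔcons => Set.Subset.antisymm (fun F hF => ?_) hΓΔ⟩,
    fun x A hA => (witness hA).imp fun u hu => hu (.inr rfl),
    fun x A hA => (witness hA).imp fun u hu => hu (.inr rfl)⟩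
  obtain ⟨u, hu⟩ := absorb (hΔ F hF) (hΔcons.mono (Set.insert_subset hF hΓΔ))
  exact hu (Set.mem_insert F _)

/-- Lindenbaum lemma.  Every tableau `FOLP_CS`-consistent set of
FOLP sentences extends to a tableau consistent, maximal and E-complete set of
closed Par-formulas. -/
theorem extend_to_maximal_Ecomplete
    (CS : Set (ℕ × Fm Empty)) (hCS : ConstantSpec CS)
    (Γ₀ : Set (Fm Empty)) (hsen : ∀ F ∈ Γ₀, F.Closed)
    (hcons : TabConsistent CS (toK '' Γ₀)) :
    ∃ Γ : Set (Fm ℕ), toK '' Γ₀ ⊆ Γ ∧ (∀ F ∈ Γ, F.Closed) ∧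
      MaximalCons CS Γ ∧ EComplete Γ :=
  extend_to_maximal_Ecomplete_general CS Γ₀ hsen hcons
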